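/- Every x ∈ 𝕋 satisfies R_up(x) ≥ limsup_{k→∞} q_{k+1}/(q_{k+1} + q_k - 1), and there exists a point x ∈ 𝕋 attaining equality; that is, min_{x ∈ 𝕋} R_up(x) = limsup_{k→∞} q_{k+1}/(q_{k+1} + q_k - 1). -/

import Mathlib

open Filter MeasureTheory Set
open scoped ENNReal

noncomputable section

/-- The rotation of the circle `𝕋 = ℝ/ℤ` by the angle `α`. -/
def rotF (α : ℝ) (y : UnitAddCircle) : UnitAddCircle := y + (α : UnitAddCircle)

/-- The Poincaré return time `τ(M)` of a set `M ⊆ 𝕋` under the rotation by `α`. -/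
def retTime (α : ℝ) (M : Set UnitAddCircle) : ℕ :=
  sInf {k : ℕ | 1 ≤ k ∧ ((rotF α)^[k] '' M ∩ M).Nonempty}

/-- The arc `I₁ = [1-α, 1)` of the circle. -/
def I1 (α : ℝ) : Set UnitAddCircle := (fun t : ℝ => (t : UnitAddCircle)) '' Ico (1 - α) 1

/-- The `n`-th cylinder interval `I_{x,n}` of `x` for the Sturmian coding
(`I_{x,0} = 𝕋` by convention). -/
def cyl (α : ℝ) (x : UnitAddCircle) (n : ℕ) : Set UnitAddCircle :=
  {y | ∀ k < n, ((rotF α)^[k] y ∈ I1 α ↔ (rotF α)^[k] x ∈ I1 α)}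

/-- The lower local return rate `R_low(x) = liminf_n τ(I_{x,n})/n`, valued in `[0,∞]`. -/
def Rlow (α : ℝ) (x : UnitAddCircle) : ℝ≥0∞ :=
  liminf (fun n : ℕ => (retTime α (cyl α x n) : ℝ≥0∞) / (n : ℝ≥0∞)) atTop

/-- The upper local return rate `R_up(x) = limsup_n τ(I_{x,n})/n`, valued in `[0,∞]`. -/
def Rup (α : ℝ) (x : UnitAddCircle) : ℝ≥0∞ :=
  limsup (fun n : ℕ => (retTime α (cyl α x n) : ℝ≥0∞) / (n : ℝ≥0∞)) atTop

/-- `rjump α q x k` is the paper's `r_{k-1}(x) = min {n | τ(I_{x,n}) ≥ q_{k-1+1}}`: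
with our indexing, `q (k+1)` is the paper's `q_k`.  In particular `rjump α q x (k+1)`
is the paper's `r_k(x)` for `k ≥ 0`, and `rjump α q x 0` is the paper's `r_{-1}(x) = 0`. -/
def rjump (α : ℝ) (q : ℕ → ℕ) (x : UnitAddCircle) (k : ℕ) : ℕ :=
  sInf {n : ℕ | q (k + 1) ≤ retTime α (cyl α x n)}

/-!
Two points `r, ρ` lie in the same cylinder `I_{·,n}` iff `⌊r + kα⌋ - ⌊ρ + kα⌋` is constant for
`k ≤ n`. By the best approximation property a return time `m < q_{k+1}` has `‖mα‖ ≥ η_k`, while the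
`q_k + q_{k+1}` points of any orbit segment meet every arc of length `η_k`; so translating by `mα`
changes some floor, and `τ(I_{x,n}) ≥ q_{k+1}` for `n = q_k + q_{k+1} - 1`. Conversely, the points
`iα` with `1 ≤ i < q_k + q_{k+1}` stay at distance `≥ η_k` from the integers on one side and
`≥ η_{k+1}` on the other, which leaves room in `I_{α,n}` for two points differing by `q_k α - p_k`; so
`τ(I_{α,n}) ≤ q_k` for `n ≤ q_k + q_{k+1} - 2`. Comparing `n` with the sequence `q_{k+1} + q_k - 1`
turns these bounds into the two inequalities between the `limsup`s.
-/

local notation "𝕋" => UnitAddCircle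

lemma coe_add_intCast (r : ℝ) (z : ℤ) : ((r + z : ℝ) : 𝕋) = r := by
  rw [← AddCircle.coe_fract, Int.fract_add_intCast, AddCircle.coe_fract]

lemma rotF_iterate_coe (α r : ℝ) (k : ℕ) : (rotF α)^[k] (r : 𝕋) = ((r + k * α : ℝ) : 𝕋) := by
  induction k with
  | zero => simp
  | succ k ih =>
    rw [Function.iterate_succ_apply', ih, rotF, ← AddCircle.coe_add]
    push_cast
    ring_nf

lemma floor_add_eq_or {α : ℝ} (hα₀ : 0 ≤ α) (hα₁ : α ≤ 1) (x : ℝ) :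
    ⌊x + α⌋ = ⌊x⌋ ∨ ⌊x + α⌋ = ⌊x⌋ + 1 := by
  have h₁ : ⌊x⌋ ≤ ⌊x + α⌋ := Int.floor_mono (by linarith)
  have h₂ : ⌊x + α⌋ ≤ ⌊x⌋ + 1 := by
    rw [← Int.floor_add_one]; exact Int.floor_mono (by linarith)
  omega

lemma coe_mem_I1_iff {α : ℝ} (hα₁ : α ≤ 1) (x : ℝ) :
    (x : 𝕋) ∈ I1 α ↔ ⌊x + α⌋ = ⌊x⌋ + 1 := by
  have hx : x + α = ⌊x⌋ + (Int.fract x + α) := by rw [Int.fract]; ring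
  rw [hx, Int.floor_intCast_add, add_right_inj, Int.floor_eq_iff]
  constructor
  · rintro ⟨t, ⟨ht₁, ht₂⟩, htx⟩
    rw [← AddCircle.coe_fract, AddCircle.coe_eq_coe_iff_of_mem_Ico (a := 0)] at htx
    · push_cast; constructor <;> linarith [Int.fract_lt_one x]
    · constructor <;> linarith
    · exact ⟨Int.fract_nonneg x, by simpa using Int.fract_lt_one x⟩
  · rintro ⟨h₁, -⟩
    refine ⟨Int.fract x, ⟨?_, Int.fract_lt_one x⟩, AddCircle.coe_fract x⟩
    push_cast at h₁; linarith

lemma forall_lt_succ_eq_iff {β : Type*} (f : ℕ → β) (n : ℕ) :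
    (∀ k < n, f (k + 1) = f k) ↔ ∀ k ≤ n, f k = f 0 := by
  constructor
  · intro h k hk
    induction k with
    | zero => rfl
    | succ k ih => rw [h k hk, ih (by omega)]
  · intro h k hk
    rw [h k hk.le, h (k + 1) hk]

lemma coe_mem_cyl_iff {α : ℝ} (hα₀ : 0 ≤ α) (hα₁ : α ≤ 1) (r ρ : ℝ) (n : ℕ) :
    (r : 𝕋) ∈ cyl α ρ n ↔ ∀ k ≤ n, ⌊r + k * α⌋ - ⌊ρ + k * α⌋ = ⌊r⌋ - ⌊ρ⌋ := by
  have key := forall_lt_succ_eq_iff (fun k : ℕ => ⌊r + k * α⌋ - ⌊ρ + k * α⌋) n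
  simp only [Nat.cast_zero, zero_mul, add_zero] at key
  simp only [cyl, Set.mem_ofPred_eq, rotF_iterate_coe, coe_mem_I1_iff hα₁, ← key]
  refine forall₂_congr fun k _ => ?_
  rw [Nat.cast_succ, add_one_mul, ← add_assoc, ← add_assoc]
  rcases floor_add_eq_or hα₀ hα₁ (r + k * α) with h | h <;>
    rcases floor_add_eq_or hα₀ hα₁ (ρ + k * α) with h' | h' <;> omega

def returnTimes (α : ℝ) (M : Set 𝕋) : Set ℕ :=
  {k : ℕ | 1 ≤ k ∧ ((rotF α)^[k] '' M ∩ M).Nonempty}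

lemma mem_returnTimes_iff {α : ℝ} {M : Set 𝕋} {m : ℕ} :
    m ∈ returnTimes α M ↔ 1 ≤ m ∧ ∃ r : ℝ, (r : 𝕋) ∈ M ∧ ((r + m * α : ℝ) : 𝕋) ∈ M := by
  refine and_congr_right fun _ => ⟨?_, ?_⟩
  · rintro ⟨-, ⟨y, hy, rfl⟩, hy'⟩
    obtain ⟨r, rfl⟩ := QuotientAddGroup.mk_surjective y
    exact ⟨r, hy, by rwa [rotF_iterate_coe] at hy'⟩
  · rintro ⟨r, hr, hr'⟩
    exact ⟨_, ⟨r, hr, rfl⟩, by rwa [rotF_iterate_coe]⟩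

lemma returnTimes_nonempty_of_arc_subset (α : ℝ) {M : Set 𝕋} {ξ W : ℝ} (hW : 0 < W)
    (hM : ∀ w, 0 ≤ w → w < W → ((ξ + w : ℝ) : 𝕋) ∈ M) : (returnTimes α M).Nonempty := by
  obtain ⟨N, hN⟩ := exists_nat_one_div_lt hW
  obtain ⟨m, hm, -, hδ⟩ := Real.exists_nat_abs_mul_sub_round_le α N.succ_pos
  have hδW : |m * α - round (m * α)| < W :=
    hδ.trans_lt <| (one_div_le_one_div_of_le (by positivity) (by push_cast; linarith)).trans_lt hN
  refine ⟨m, mem_returnTimes_iff.2 ⟨hm, ?_⟩⟩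
  rcases le_total 0 (m * α - round (m * α)) with hδ₀ | hδ₀
  · refine ⟨ξ, by simpa using hM 0 le_rfl hW, ?_⟩
    rw [abs_of_nonneg hδ₀] at hδW
    convert hM _ hδ₀ hδW using 1
    rw [← coe_add_intCast (ξ + (m * α - round (m * α))) (round (m * α))]
    ring_nf
  · rw [abs_of_nonpos hδ₀] at hδW
    refine ⟨ξ - (m * α - round (m * α)), by simpa [sub_eq_add_neg] using hM _ (by linarith) hδW, ?_⟩
    convert hM 0 le_rfl hW using 1
    rw [add_zero, ← coe_add_intCast ξ (round (m * α))]
    ring_nf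

lemma floor_add_eq_floor {y w : ℝ} (hw₀ : 0 ≤ w) (hw : w < 1 - Int.fract y) : ⌊y + w⌋ = ⌊y⌋ := by
  rw [Int.floor_eq_iff]
  constructor <;> linarith [Int.floor_le y, Int.fract_add_floor y]

lemma exists_arc_subset_cyl {α : ℝ} (hα₀ : 0 ≤ α) (hα₁ : α ≤ 1) (ξ : ℝ) (n : ℕ) :
    ∃ W > 0, ∀ w, 0 ≤ w → w < W → ((ξ + w : ℝ) : 𝕋) ∈ cyl α ξ n := by
  let gap (k : ℕ) : ℝ := 1 - Int.fract (ξ + k * α)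
  refine ⟨(Finset.range (n + 1)).inf' ⟨0, by simp⟩ gap, ?_, fun w hw₀ hw => ?_⟩
  · exact (Finset.lt_inf'_iff _).2 fun k _ => sub_pos.2 (Int.fract_lt_one _)
  · refine (coe_mem_cyl_iff hα₀ hα₁ _ _ n).2 fun k hk => ?_
    have hwk : w < gap k :=
      hw.trans_le (Finset.inf'_le _ (Finset.mem_range.2 (Nat.lt_succ_of_le hk)))
    have hwk₀ : w < gap 0 := hw.trans_le (Finset.inf'_le _ (by simp))
    simp only [gap, Nat.cast_zero, zero_mul, add_zero] at hwk hwk₀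
    rw [add_right_comm, floor_add_eq_floor hw₀ hwk, floor_add_eq_floor hw₀ hwk₀, sub_self, sub_self]

lemma returnTimes_cyl_nonempty {α : ℝ} (hα₀ : 0 ≤ α) (hα₁ : α ≤ 1) (x : 𝕋) (n : ℕ) :
    (returnTimes α (cyl α x n)).Nonempty := by
  obtain ⟨ξ, rfl⟩ := QuotientAddGroup.mk_surjective x
  obtain ⟨W, hW, hcyl⟩ := exists_arc_subset_cyl hα₀ hα₁ ξ n
  exact returnTimes_nonempty_of_arc_subset α hW hcyl

lemma limsup_le_limsup_comp_of_le {β : Type*} [CompleteLattice β] {f u : ℕ → β} {φ : ℕ → ℕ}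
    (hφ : StrictMono φ) (hfu : ∀ k, u k ≤ f (φ k)) : limsup u atTop ≤ limsup f atTop :=
  calc limsup u atTop ≤ limsup (f ∘ φ) atTop := limsup_le_limsup (.of_forall hfu)
    _ ≤ limsup f atTop := hφ.tendsto_atTop.limsup_comp_le_limsup

lemma limsup_le_limsup_of_le_of_mem_Ico {β : Type*} [CompleteLattice β] {f u : ℕ → β}
    {φ : ℕ → ℕ} (hφ : StrictMono φ) (hfu : ∀ k n, φ k ≤ n → n < φ (k + 1) → f n ≤ u k) :
    limsup f atTop ≤ limsup u atTop := by
  have hκ (n : ℕ) : ∃ k, φ 0 ≤ n → φ k ≤ n ∧ n < φ (k + 1) := by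
    by_cases hn : φ 0 ≤ n
    · obtain ⟨k, hk₁, hk₂⟩ :=
        hφ.exists_between_of_tendsto_atTop hφ.tendsto_atTop (x := n + 1) (by omega)
      exact ⟨k, fun _ => ⟨by omega, by omega⟩⟩
    · exact ⟨0, fun h => absurd h hn⟩
  choose κ hκ using hκ
  have hκ_tendsto : Tendsto κ atTop atTop := by
    refine tendsto_atTop_atTop.2 fun K => ⟨φ K, fun n hn => ?_⟩
    have := (hκ n (hφ.monotone (Nat.zero_le K) |>.trans hn)).2
    exact Nat.lt_succ_iff.1 (hφ.lt_iff_lt.1 (hn.trans_lt this))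
  calc limsup f atTop ≤ limsup (u ∘ κ) atTop :=
        limsup_le_limsup (eventually_atTop.2 ⟨φ 0, fun n hn => hfu _ _ (hκ n hn).1 (hκ n hn).2⟩)
    _ ≤ limsup u atTop := hκ_tendsto.limsup_comp_le_limsup

/-- With the indexing of the statement, `eta α p q (k + 1)` is the paper's `η_k = |q_k α - p_k|`. -/
def eta (α : ℝ) (p q : ℕ → ℕ) (k : ℕ) : ℝ := (-1) ^ (k + 1) * (q k * α - p k)

lemma mul_sub_eq_neg_one_pow_mul_eta (α : ℝ) (p q : ℕ → ℕ) (k : ℕ) :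
    q k * α - p k = (-1) ^ (k + 1) * eta α p q k := by
  rw [eta, ← mul_assoc, ← mul_pow]
  norm_num

structure IsContFracExpansion (α : ℝ) (a p q : ℕ → ℕ) : Prop where
  one_le_a : ∀ k, 1 ≤ a k
  q_zero : q 0 = 0
  q_one : q 1 = 1
  q_add_two : ∀ k, q (k + 2) = a k * q (k + 1) + q k
  p_zero : p 0 = 1
  p_one : p 1 = 0
  p_add_two : ∀ k, p (k + 2) = a k * p (k + 1) + p k
  eta_pos : ∀ k, 0 < eta α p q k

namespace IsContFracExpansion

variable {α : ℝ} {a p q : ℕ → ℕ} (h : IsContFracExpansion α a p q)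
include h

lemma one_le_q_succ (k : ℕ) : 1 ≤ q (k + 1) := by
  induction k with
  | zero => exact h.q_one.ge
  | succ k ih =>
    rw [h.q_add_two]
    nlinarith [h.one_le_a k]

lemma strictMono_q_add_q_sub_one : StrictMono fun k => q (k + 2) + q (k + 1) - 1 := by
  refine strictMono_nat_of_lt_succ fun k => ?_
  have h₁ : 1 ≤ q (k + 2) := h.one_le_q_succ (k + 1)
  have h₂ : q (k + 2) ≤ a (k + 1) * q (k + 2) := Nat.le_mul_of_pos_left _ (h.one_le_a _)
  have h₃ : q (k + 3) = a (k + 1) * q (k + 2) + q (k + 1) := h.q_add_two (k + 1)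
  show q (k + 2) + q (k + 1) - 1 < q (k + 3) + q (k + 2) - 1
  omega

lemma eta_eq_add (k : ℕ) : eta α p q k = a k * eta α p q (k + 1) + eta α p q (k + 2) := by
  simp only [eta, h.q_add_two, h.p_add_two, pow_succ]
  push_cast
  ring

lemma eta_succ_lt (k : ℕ) : eta α p q (k + 1) < eta α p q k := by
  have ha : (1 : ℝ) ≤ a k := by exact_mod_cast h.one_le_a k
  nlinarith [h.eta_eq_add k, h.eta_pos (k + 1), h.eta_pos (k + 2)]

lemma det_eq (J : ℕ) : (q (J + 1) : ℤ) * p J - q J * p (J + 1) = (-1) ^ J := by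
  induction J with
  | zero => simp [h.q_zero, h.q_one, h.p_zero, h.p_one]
  | succ J ih =>
    rw [h.q_add_two, h.p_add_two, pow_succ]
    push_cast
    linear_combination -ih

/-- `(q_J, p_J), (q_{J+1}, p_{J+1})` is a basis of `ℤ²`. -/
lemma exists_eq_and_neg_one_pow_mul_eq (J : ℕ) (i c : ℤ) :
    ∃ s t : ℤ, i = s * q J + t * q (J + 1) ∧
      (-1) ^ (J + 1) * (i * α - c) = s * eta α p q J - t * eta α p q (J + 1) := by
  obtain ⟨s, t, hi, hc⟩ : ∃ s t : ℤ, i = s * q J + t * q (J + 1) ∧ c = s * p J + t * p (J + 1) := by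
    obtain ⟨D, hD, hdet⟩ : ∃ D : ℤ, D * D = 1 ∧ (q (J + 1) : ℤ) * p J - q J * p (J + 1) = D :=
      ⟨_, by rw [← mul_pow]; norm_num, h.det_eq J⟩
    refine ⟨D * (q (J + 1) * c - p (J + 1) * i), D * (p J * i - q J * c), ?_, ?_⟩
    · linear_combination (-i * D) * hdet - i * hD
    · linear_combination (-c * D) * hdet - c * hD
  refine ⟨s, t, hi, ?_⟩
  have hiR : (i : ℝ) = s * q J + t * q (J + 1) := by exact_mod_cast hi
  have hcR : (c : ℝ) = s * p J + t * p (J + 1) := by exact_mod_cast hc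
  have hu : ((-1 : ℝ) ^ J) * (-1) ^ J = 1 := by rw [← mul_pow]; norm_num
  linear_combination (-1 : ℝ) ^ (J + 1) * (α * hiR - hcR
      + s * mul_sub_eq_neg_one_pow_mul_eta α p q J + t * mul_sub_eq_neg_one_pow_mul_eta α p q (J + 1))
    + (s * eta α p q J - t * eta α p q (J + 1)) * hu

lemma eta_le_or_le_neg_eta {J i : ℕ} (hi₁ : 1 ≤ i) (hi₂ : i < q J + q (J + 1)) (c : ℤ) :
    eta α p q J ≤ (-1) ^ (J + 1) * (i * α - c) ∨
      (-1) ^ (J + 1) * (i * α - c) ≤ -eta α p q (J + 1) := by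
  obtain ⟨s, t, hi, hσ⟩ := h.exists_eq_and_neg_one_pow_mul_eq J i c
  push_cast at hσ
  have hη := h.eta_pos J
  have hη' := h.eta_pos (J + 1)
  rw [hσ]
  rcases le_or_gt s 0 with hs | hs <;> rcases le_or_gt t 0 with ht | ht
  · nlinarith
  · right
    have hs' : (s : ℝ) ≤ 0 := by exact_mod_cast hs
    have ht' : (1 : ℝ) ≤ t := by exact_mod_cast ht
    nlinarith
  · left
    have hs' : (1 : ℝ) ≤ s := by exact_mod_cast hs
    have ht' : (t : ℝ) ≤ 0 := by exact_mod_cast ht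
    nlinarith
  · nlinarith

lemma eta_le_abs_mul_sub {J i : ℕ} (hi₁ : 1 ≤ i) (hi₂ : i < q (J + 1)) (c : ℤ) :
    eta α p q J ≤ |i * α - c| := by
  obtain ⟨s, t, hi, hσ⟩ := h.exists_eq_and_neg_one_pow_mul_eq J i c
  push_cast at hσ
  have hη := h.eta_pos J
  have hη' := h.eta_pos (J + 1)
  rw [← one_mul |_|, ← abs_neg_one_pow (α := ℝ) (J + 1), ← abs_mul, hσ]
  rcases le_or_gt t 0 with ht | ht
  · have hs : (1 : ℝ) ≤ s := by exact_mod_cast (by nlinarith : 1 ≤ s)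
    have ht' : (t : ℝ) ≤ 0 := by exact_mod_cast ht
    exact le_abs.2 (Or.inl (by nlinarith))
  · have hs : (s : ℝ) ≤ -1 := by exact_mod_cast (by nlinarith : s ≤ -1)
    have ht' : (1 : ℝ) ≤ t := by exact_mod_cast ht
    exact le_abs.2 (Or.inr (by nlinarith))

lemma exists_mul_eq_mul_add {J i : ℕ} (hi : i < q J + q (J + 1)) :
    ∃ i' < q J + q (J + 1), ∃ e, 0 < e ∧ e ≤ eta α p q J ∧
      ∃ z : ℤ, (i' : ℝ) * α = i * α + (-1) ^ (J + 1) * e + z := by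
  rcases lt_or_ge (i + q J) (q J + q (J + 1)) with hlt | hge
  · refine ⟨i + q J, hlt, _, h.eta_pos J, le_rfl, p J, ?_⟩
    push_cast
    linear_combination mul_sub_eq_neg_one_pow_mul_eta α p q J
  · refine ⟨i - q (J + 1), by omega, _, h.eta_pos (J + 1), (h.eta_succ_lt J).le, -p (J + 1), ?_⟩
    rw [Nat.cast_sub (by omega)]
    push_cast
    linear_combination -mul_sub_eq_neg_one_pow_mul_eta α p q (J + 1)

/-- Each of the points `β + i α` has a neighbour at distance at most `η_J` on the side given by the
sign of `q_J α - p_J`; the extreme point on that side can only find it across `0`. -/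
lemma exists_fract_lt_eta (J : ℕ) (β : ℝ) :
    ∃ i < q J + q (J + 1), Int.fract (β + i * α) < eta α p q J := by
  set g : ℕ → ℝ := fun i => Int.fract (β + i * α)
  have hg01 (i : ℕ) : 0 ≤ g i ∧ g i < 1 := ⟨Int.fract_nonneg _, Int.fract_lt_one _⟩
  have hne : (Finset.range (q J + q (J + 1))).Nonempty :=
    Finset.nonempty_range_iff.2 (by have := h.one_le_q_succ J; omega)
  have step : ∀ i < q J + q (J + 1), ∃ i' < q J + q (J + 1), ∃ e, 0 < e ∧ e ≤ eta α p q J ∧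
      g i' = Int.fract (g i + (-1) ^ (J + 1) * e) := by
    intro i hi
    obtain ⟨i', hi', e, he₀, he, z, hz⟩ := h.exists_mul_eq_mul_add hi
    refine ⟨i', hi', e, he₀, he, ?_⟩
    have : β + i' * α = g i + (-1) ^ (J + 1) * e + (⌊β + i * α⌋ + z : ℤ) := by
      push_cast [g, hz, Int.fract]; ring
    simp only [g, this, Int.fract_add_intCast]
  rcases neg_one_pow_eq_or ℝ (J + 1) with hσ | hσ
  · obtain ⟨i₀, hi₀, hmax⟩ := Finset.exists_max_image _ g hne
    obtain ⟨i', hi', e, he₀, he, hg⟩ := step i₀ (Finset.mem_range.1 hi₀)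
    rw [hσ, one_mul] at hg
    refine ⟨i', hi', show g i' < _ from ?_⟩
    have hle := hmax i' (Finset.mem_range.2 hi')
    have := hg01 i₀
    by_cases hlt : g i₀ + e < 1
    · rw [Int.fract_eq_self.2 ⟨by linarith, hlt⟩] at hg
      linarith
    · have hfl : (1 : ℝ) ≤ ⌊g i₀ + e⌋ := by exact_mod_cast Int.le_floor.2 (by push_cast; linarith)
      rw [hg, Int.fract]
      linarith
  · obtain ⟨i₀, hi₀, hmin⟩ := Finset.exists_min_image _ g hne
    obtain ⟨i', hi', e, he₀, he, hg⟩ := step i₀ (Finset.mem_range.1 hi₀)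
    rw [hσ, neg_one_mul, ← sub_eq_add_neg] at hg
    refine ⟨i₀, Finset.mem_range.1 hi₀, ?_⟩
    have hle := hmin i' (Finset.mem_range.2 hi')
    have := hg01 i₀
    by_contra! hge
    rw [Int.fract_eq_self.2 ⟨by linarith, by linarith⟩] at hg
    linarith

lemma floor_mul_add_eq_floor {J i : ℕ} (hi₁ : 1 ≤ i) (hi₂ : i < q J + q (J + 1)) {w : ℝ}
    (hw₁ : -eta α p q J < (-1) ^ (J + 1) * w) (hw₂ : (-1) ^ (J + 1) * w < eta α p q (J + 1)) :
    ⌊i * α + w⌋ = ⌊i * α⌋ := by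
  refine Int.floor_congr fun c => ?_
  rw [← sub_nonneg, ← sub_nonneg (b := (c : ℝ))]
  have := h.eta_pos J
  have := h.eta_pos (J + 1)
  rcases h.eta_le_or_le_neg_eta hi₁ hi₂ c with hc | hc <;>
    rcases neg_one_pow_eq_or ℝ (J + 1) with hσ | hσ <;>
    simp only [hσ, one_mul, neg_one_mul] at hc hw₁ hw₂ <;>
    constructor <;> intro <;> linarith

variable (hα₀ : 0 ≤ α) (hα₁ : α ≤ 1)
include hα₀ hα₁

lemma le_of_mem_returnTimes_cyl {x : 𝕋} {n J m : ℕ} (hn : n + 1 = q J + q (J + 1))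
    (hm : m ∈ returnTimes α (cyl α x n)) : q (J + 1) ≤ m := by
  obtain ⟨hm₁, β, hβ, hβm⟩ := mem_returnTimes_iff.1 hm
  obtain ⟨ρ, rfl⟩ := QuotientAddGroup.mk_surjective x
  rw [coe_mem_cyl_iff hα₀ hα₁] at hβ hβm
  by_contra! hlt
  set T := Int.fract (m * α)
  have hT₁ : eta α p q J ≤ T := by
    have := h.eta_le_abs_mul_sub hm₁ hlt ⌊m * α⌋
    rwa [Int.self_sub_floor, abs_of_nonneg (Int.fract_nonneg _)] at this
  have hT₂ : eta α p q J ≤ 1 - T := by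
    have := h.eta_le_abs_mul_sub hm₁ hlt (⌊m * α⌋ + 1)
    rwa [Int.cast_add, Int.cast_one, ← sub_sub, Int.self_sub_floor,
      abs_of_nonpos (by linarith [Int.fract_lt_one (m * α)]), neg_sub] at this
  have hshift (y : ℝ) : ⌊y + m * α⌋ = ⌊y + T⌋ + ⌊m * α⌋ := by
    rw [← Int.floor_add_intCast, add_assoc, Int.fract_add_floor]
  -- `β` and `β + m α` have the same coding, so adding `T` changes all floors along the orbit alike
  have hD : ∀ i ≤ n, ⌊β + i * α + T⌋ - ⌊β + i * α⌋ = ⌊β + T⌋ - ⌊β⌋ := by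
    intro i hi
    have h₁ := hβ i hi
    have h₂ := hβm i hi
    rw [add_right_comm, hshift, hshift] at h₂
    omega
  obtain ⟨i₀, hi₀, hfr₀⟩ := h.exists_fract_lt_eta J β
  obtain ⟨i₁, hi₁, hfr₁⟩ := h.exists_fract_lt_eta J (β + T)
  have hD₀ : ⌊β + i₀ * α + T⌋ = ⌊β + i₀ * α⌋ :=
    floor_add_eq_floor (Int.fract_nonneg _) (by linarith)
  have hD₁ : ⌊β + i₁ * α + T⌋ ≠ ⌊β + i₁ * α⌋ := by
    intro heq
    rw [add_right_comm, Int.fract, heq] at hfr₁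
    linarith [Int.floor_le (β + i₁ * α), Int.fract_add_floor (β + i₁ * α)]
  have := hD i₀ (by omega)
  have := hD i₁ (by omega)
  omega

lemma le_retTime_cyl (x : 𝕋) {n J : ℕ} (hn : n + 1 = q J + q (J + 1)) :
    q (J + 1) ≤ retTime α (cyl α x n) :=
  le_csInf (returnTimes_cyl_nonempty hα₀ hα₁ x n) fun _ hm =>
    h.le_of_mem_returnTimes_cyl hα₀ hα₁ hn hm

lemma retTime_cyl_le {n J : ℕ} (hn : n + 1 < q J + q (J + 1)) :
    retTime α (cyl α α n) ≤ q J := by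
  have hqJ : 1 ≤ q J := by
    cases J with
    | zero => simp [h.q_zero, h.q_one] at hn
    | succ J => exact h.one_le_q_succ J
  set σ : ℝ := (-1) ^ (J + 1)
  have hσσ : σ * σ = 1 := by rw [← mul_pow]; norm_num
  have hη := h.eta_pos J
  have hη' := h.eta_pos (J + 1)
  have hmem (w : ℝ) (hw₁ : -eta α p q J < σ * w) (hw₂ : σ * w < eta α p q (J + 1)) :
      ((α + w : ℝ) : 𝕋) ∈ cyl α α n := by
    have hfl (i : ℕ) (hi₁ : 1 ≤ i) (hi₂ : i ≤ n + 1) : ⌊i * α + w⌋ = ⌊i * α⌋ :=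
      h.floor_mul_add_eq_floor hi₁ (by omega) hw₁ hw₂
    refine (coe_mem_cyl_iff hα₀ hα₁ _ _ n).2 fun k hk => ?_
    have h₁ : ⌊α + w + k * α⌋ = ⌊α + k * α⌋ := by
      convert hfl (k + 1) (by omega) (by omega) using 2 <;> push_cast <;> ring
    have h₀ : ⌊α + w⌋ = ⌊α⌋ := by simpa using hfl 1 le_rfl (by omega)
    rw [h₁, h₀, sub_self, sub_self]
  -- two points of the cylinder that differ by `q_J α - p_J = σ η_J`
  set w₂ := σ * eta α p q (J + 1) / 2
  set w₁ := w₂ - σ * eta α p q J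
  have hσw₁ : σ * w₁ = eta α p q (J + 1) / 2 - eta α p q J := by
    linear_combination (eta α p q (J + 1) / 2 - eta α p q J) * hσσ
  have hσw₂ : σ * w₂ = eta α p q (J + 1) / 2 := by
    linear_combination (eta α p q (J + 1) / 2) * hσσ
  have hshift : α + w₁ + q J * α = α + w₂ + (p J : ℤ) := by
    push_cast
    linear_combination mul_sub_eq_neg_one_pow_mul_eta α p q J
  refine Nat.sInf_le (mem_returnTimes_iff.2 ⟨hqJ, α + w₁, hmem w₁ ?_ ?_, ?_⟩)
  · linarith
  · linarith
  · rw [hshift, coe_add_intCast]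
    exact hmem w₂ (by linarith) (by linarith)

end IsContFracExpansion

theorem statement6_general
    (α : ℝ) (hα : α ∈ Set.Ioo (0 : ℝ) 1)
    (a p q : ℕ → ℕ) (ha : ∀ k, 1 ≤ a k)
    -- `a k`, `p (k+1)`, `q (k+1)` are the paper's `a_{k+1}`, `p_k`, `q_k`;
    -- `p 0`, `q 0` are the paper's `p_{-1} = 1`, `q_{-1} = 0`.
    (hq0 : q 0 = 0) (hq1 : q 1 = 1) (hq : ∀ k, q (k + 2) = a k * q (k + 1) + q k)
    (hp0 : p 0 = 1) (hp1 : p 1 = 0) (hp : ∀ k, p (k + 2) = a k * p (k + 1) + p k)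
    -- `a` is the continued fraction expansion of `α`:
    -- the paper's `η_k = (-1)^k (q_k α - p_k)` is positive for all `k ≥ -1`.
    (hcf : ∀ k, 0 < (-1 : ℝ) ^ (k + 1) * ((q k : ℝ) * α - (p k : ℝ)))
    :
    (∀ x : UnitAddCircle,
      limsup (fun k : ℕ =>
        (q (k + 2) : ℝ≥0∞) / ((q (k + 2) + q (k + 1) - 1 : ℕ) : ℝ≥0∞)) atTop ≤ Rup α x) ∧
    (∃ x : UnitAddCircle,
      Rup α x =
        limsup (fun k : ℕ =>
          (q (k + 2) : ℝ≥0∞) / ((q (k + 2) + q (k + 1) - 1 : ℕ) : ℝ≥0∞)) atTop) := by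
  have h : IsContFracExpansion α a p q := ⟨ha, hq0, hq1, hq, hp0, hp1, hp, hcf⟩
  have hα₀ : 0 ≤ α := hα.1.le
  have hα₁ : α ≤ 1 := hα.2.le
  have hφ := h.strictMono_q_add_q_sub_one
  have hφ_add_one (k : ℕ) : q (k + 2) + q (k + 1) - 1 + 1 = q (k + 1) + q (k + 2) := by
    have : 1 ≤ q (k + 2) := h.one_le_q_succ (k + 1)
    omega
  have lower (x : 𝕋) : limsup (fun k : ℕ =>
      (q (k + 2) : ℝ≥0∞) / ((q (k + 2) + q (k + 1) - 1 : ℕ) : ℝ≥0∞)) atTop ≤ Rup α x :=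
    limsup_le_limsup_comp_of_le hφ fun k =>
      ENNReal.div_le_div_right (by exact_mod_cast h.le_retTime_cyl hα₀ hα₁ x (hφ_add_one k)) _
  refine ⟨lower, α, le_antisymm ?_ (lower α)⟩
  refine limsup_le_limsup_of_le_of_mem_Ico hφ fun k n hkn hnk => ENNReal.div_le_div ?_ ?_
  · have hn : n < q (k + 3) + q (k + 2) - 1 := hnk
    exact_mod_cast h.retTime_cyl_le hα₀ hα₁ (J := k + 2)
      (show n + 1 < q (k + 2) + q (k + 3) by omega)
  · exact_mod_cast hkn

/-- Every `x ∈ 𝕋` satisfies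
`R_up(x) ≥ limsup_{k→∞} q_{k+1} / (q_{k+1} + q_k - 1)`, and some `x ∈ 𝕋` attains
equality; that is, `min_x R_up(x) = limsup_{k→∞} q_{k+1} / (q_{k+1} + q_k - 1)`.
With our indexing the paper's `q_k`, `q_{k+1}` are `q (k+1)`, `q (k+2)`. -/
theorem statement6
    (α : ℝ) (hα : α ∈ Set.Ioo (0 : ℝ) 1) (hirr : Irrational α)
    (a p q : ℕ → ℕ) (ha : ∀ k, 1 ≤ a k)
    -- `a k`, `p (k+1)`, `q (k+1)` are the paper's `a_{k+1}`, `p_k`, `q_k`;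
    -- `p 0`, `q 0` are the paper's `p_{-1} = 1`, `q_{-1} = 0`.
    (hq0 : q 0 = 0) (hq1 : q 1 = 1) (hq : ∀ k, q (k + 2) = a k * q (k + 1) + q k)
    (hp0 : p 0 = 1) (hp1 : p 1 = 0) (hp : ∀ k, p (k + 2) = a k * p (k + 1) + p k)
    -- `a` is the continued fraction expansion of `α`:
    -- the paper's `η_k = (-1)^k (q_k α - p_k)` is positive for all `k ≥ -1`.
    (hcf : ∀ k, 0 < (-1 : ℝ) ^ (k + 1) * ((q k : ℝ) * α - (p k : ℝ)))
    :
    (∀ x : UnitAddCircle,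
      limsup (fun k : ℕ =>
        (q (k + 2) : ℝ≥0∞) / ((q (k + 2) + q (k + 1) - 1 : ℕ) : ℝ≥0∞)) atTop ≤ Rup α x) ∧
    (∃ x : UnitAddCircle,
      Rup α x =
        limsup (fun k : ℕ =>
          (q (k + 2) : ℝ≥0∞) / ((q (k + 2) + q (k + 1) - 1 : ℕ) : ℝ≥0∞)) atTop) :=
  statement6_general α hα a p q ha hq0 hq1 hq hp0 hp1 hp hcf
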